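/- Let c : ℝ^d × ℝ^d → ℝ be continuous and bounded, and let h̄ be a nonnegative function in L^∞(ℝ^d × ℝ^d) with compact support. Let h be a nonnegative, compactly supported function in L¹(ℝ^d × ℝ^d) with marginals h_X(x) = ∫ h(x,y) dy and h_Y(y) = ∫ h(x,y) dx, and suppose h minimizes I_c over Γ(h_X, h_Y)^h̄. Let A, B ⊆ ℝ^d be Borel sets and set h̃ := h·1_{A×B}, the restriction of h to the rectangular set A × B, with marginals h̃_X, h̃_Y. Then h̃ minimizes I_c over Γ(h̃_X, h̃_Y)^h̄. -/

import Mathlib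

open MeasureTheory Filter Set Topology

/-!
Given a competitor `k` for `h̃ = h·1_{A×B}`, the function `h - h̃ + k` is a competitor for `h`:
`k` has the marginals of `h̃`, which vanish off `A` and off `B`, so the nonnegative `k` vanishes
off `A × B`; hence `h - h̃ + k` equals `k` on `A × B` and `h` elsewhere, and it lies below `h̄`.
Its cost is `I_c(h) - I_c(h̃) + I_c(k)` by linearity, so optimality of `h` gives
`I_c(h̃) ≤ I_c(k)`.
-/

noncomputable section

/-- The transportation cost `I_c(h) = ∫∫ c(x,y) h(x,y) dx dy` on `ℝ^d × ℝ^d`. -/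
def Icost {d : ℕ} (c h : ((Fin d → ℝ) × (Fin d → ℝ)) → ℝ) : ℝ :=
  ∫ p, c p * h p

/-- `h ∈ Γ(f,g)`: `h` is a nonnegative integrable joint density on `ℝ^d × ℝ^d`
with marginals `f` and `g`. -/
def InGamma {d : ℕ} (f g : (Fin d → ℝ) → ℝ)
    (h : ((Fin d → ℝ) × (Fin d → ℝ)) → ℝ) : Prop :=
  Integrable h volume ∧ (∀ᵐ p ∂volume, 0 ≤ h p) ∧
    (∀ᵐ x ∂volume, (∫ y, h (x, y)) = f x) ∧
    (∀ᵐ y ∂volume, (∫ x, h (x, y)) = g y)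

/-- `h ∈ Γ(f,g)^h̄`: `h ∈ Γ(f,g)` and `h` is dominated by `h̄` a.e. -/
def InGammaBar {d : ℕ} (f g : (Fin d → ℝ) → ℝ)
    (hbar h : ((Fin d → ℝ) × (Fin d → ℝ)) → ℝ) : Prop :=
  InGamma f g h ∧ ∀ᵐ p ∂volume, h p ≤ hbar p

section Fibers

variable {α β : Type*} [MeasurableSpace α] [MeasurableSpace β]
  {μ : Measure α} {ν : Measure β} [SFinite μ] [SFinite ν]

theorem ae_fst_notMem_imp_eq_zero {k : α × β → ℝ} (hk : Integrable k (μ.prod ν))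
    (hk0 : 0 ≤ᵐ[μ.prod ν] k) {A : Set α} (hA : MeasurableSet A)
    (hzero : ∀ᵐ x ∂μ, x ∉ A → ∫ y, k (x, y) ∂ν = 0) :
    ∀ᵐ p ∂μ.prod ν, p.1 ∉ A → k p = 0 := by
  set g := (Aᶜ ×ˢ (univ : Set β)).indicator k
  have hg : Integrable g (μ.prod ν) := hk.indicator (hA.compl.prod .univ)
  have hg_zero : ∫ p, g p ∂μ.prod ν = 0 := by
    rw [integral_prod _ hg]
    refine integral_eq_zero_of_ae ?_
    filter_upwards [hzero] with x hx
    by_cases hxA : x ∈ A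
    · simp [g, hxA]
    · simpa [g, hxA] using hx hxA
  have hg_nonneg : 0 ≤ᵐ[μ.prod ν] g := by
    filter_upwards [hk0] with p hp
    exact indicator_nonneg (fun _ _ => hp) p
  filter_upwards [(integral_eq_zero_iff_of_nonneg_ae hg_nonneg hg).1 hg_zero] with p hp hpA
  simpa [g, hpA] using hp

theorem ae_snd_notMem_imp_eq_zero {k : α × β → ℝ} (hk : Integrable k (μ.prod ν))
    (hk0 : 0 ≤ᵐ[μ.prod ν] k) {B : Set β} (hB : MeasurableSet B)
    (hzero : ∀ᵐ y ∂ν, y ∉ B → ∫ x, k (x, y) ∂μ = 0) :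
    ∀ᵐ p ∂μ.prod ν, p.2 ∉ B → k p = 0 := by
  have hk0' : 0 ≤ᵐ[ν.prod μ] k ∘ Prod.swap :=
    Measure.measurePreserving_swap.quasiMeasurePreserving.ae hk0
  exact Measure.measurePreserving_swap.quasiMeasurePreserving.ae
    (ae_fst_notMem_imp_eq_zero hk.swap hk0' hB hzero)

theorem ae_notMem_prod_imp_eq_zero {k : α × β → ℝ} (hk : Integrable k (μ.prod ν))
    (hk0 : 0 ≤ᵐ[μ.prod ν] k) {A : Set α} {B : Set β} (hA : MeasurableSet A)
    (hB : MeasurableSet B) (hzeroA : ∀ᵐ x ∂μ, x ∉ A → ∫ y, k (x, y) ∂ν = 0)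
    (hzeroB : ∀ᵐ y ∂ν, y ∉ B → ∫ x, k (x, y) ∂μ = 0) :
    ∀ᵐ p ∂μ.prod ν, p ∉ A ×ˢ B → k p = 0 := by
  filter_upwards [ae_fst_notMem_imp_eq_zero hk hk0 hA hzeroA,
    ae_snd_notMem_imp_eq_zero hk hk0 hB hzeroB] with p hpA hpB hpAB
  by_cases hp : p.1 ∈ A
  · exact hpB fun hp' => hpAB ⟨hp, hp'⟩
  · exact hpA hp

theorem ae_integral_sub_add_right {f t k : α × β → ℝ} (hf : Integrable f (μ.prod ν))
    (ht : Integrable t (μ.prod ν)) (hk : Integrable k (μ.prod ν))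
    (hkt : ∀ᵐ x ∂μ, ∫ y, k (x, y) ∂ν = ∫ y, t (x, y) ∂ν) :
    ∀ᵐ x ∂μ, ∫ y, (f - t + k) (x, y) ∂ν = ∫ y, f (x, y) ∂ν := by
  filter_upwards [hf.prod_right_ae, ht.prod_right_ae, hk.prod_right_ae, hkt]
    with x hfx htx hkx hx
  simp only [Pi.add_apply, Pi.sub_apply]
  rw [integral_add (f := fun y => f (x, y) - t (x, y)) (hfx.sub htx) hkx,
    integral_sub hfx htx, hx]
  ring

theorem ae_integral_sub_add_left {f t k : α × β → ℝ} (hf : Integrable f (μ.prod ν))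
    (ht : Integrable t (μ.prod ν)) (hk : Integrable k (μ.prod ν))
    (hkt : ∀ᵐ y ∂ν, ∫ x, k (x, y) ∂μ = ∫ x, t (x, y) ∂μ) :
    ∀ᵐ y ∂ν, ∫ x, (f - t + k) (x, y) ∂μ = ∫ x, f (x, y) ∂μ :=
  ae_integral_sub_add_right hf.swap ht.swap hk.swap hkt

end Fibers

section Transport

variable {d : ℕ}

theorem integrable_cost_mul {c f : (Fin d → ℝ) × (Fin d → ℝ) → ℝ}
    (hc : AEStronglyMeasurable c) (hc_bdd : ∃ M, ∀ p, |c p| ≤ M) (hf : Integrable f) :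
    Integrable (fun p => c p * f p) := by
  obtain ⟨M, hM⟩ := hc_bdd
  exact hf.bdd_mul hc (.of_forall fun p => by rw [Real.norm_eq_abs]; exact hM p)

theorem Icost_add {c f g : (Fin d → ℝ) × (Fin d → ℝ) → ℝ} (hc : AEStronglyMeasurable c)
    (hc_bdd : ∃ M, ∀ p, |c p| ≤ M) (hf : Integrable f) (hg : Integrable g) :
    Icost c (f + g) = Icost c f + Icost c g := by
  simp only [Icost, Pi.add_apply, mul_add]
  exact integral_add (integrable_cost_mul hc hc_bdd hf) (integrable_cost_mul hc hc_bdd hg)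

theorem Icost_sub {c f g : (Fin d → ℝ) × (Fin d → ℝ) → ℝ} (hc : AEStronglyMeasurable c)
    (hc_bdd : ∃ M, ∀ p, |c p| ≤ M) (hf : Integrable f) (hg : Integrable g) :
    Icost c (f - g) = Icost c f - Icost c g := by
  simp only [Icost, Pi.sub_apply, mul_sub]
  exact integral_sub (integrable_cost_mul hc hc_bdd hf) (integrable_cost_mul hc hc_bdd hg)

theorem inGammaBar_indicator {hbar h : (Fin d → ℝ) × (Fin d → ℝ) → ℝ}
    {S : Set ((Fin d → ℝ) × (Fin d → ℝ))} (hS : MeasurableSet S) (h_int : Integrable h)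
    (h_nonneg : ∀ᵐ p, 0 ≤ h p) (h_le : ∀ᵐ p, h p ≤ hbar p) (hbar_nonneg : ∀ p, 0 ≤ hbar p) :
    InGammaBar (fun x => ∫ y, S.indicator h (x, y)) (fun y => ∫ x, S.indicator h (x, y))
      hbar (S.indicator h) := by
  refine ⟨⟨h_int.indicator hS, ?_, .of_forall fun _ => rfl, .of_forall fun _ => rfl⟩, ?_⟩
  · filter_upwards [h_nonneg] with p hp
    exact indicator_nonneg (fun _ _ => hp) p
  · filter_upwards [h_le] with p hp
    by_cases hpS : p ∈ S
    · simpa [hpS] using hp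
    · simpa [hpS] using hbar_nonneg p

theorem InGamma.ae_eq_zero_off_prod {h k : (Fin d → ℝ) × (Fin d → ℝ) → ℝ}
    {A B : Set (Fin d → ℝ)} (hA : MeasurableSet A) (hB : MeasurableSet B)
    (hk : InGamma (fun x => ∫ y, (A ×ˢ B).indicator h (x, y))
      (fun y => ∫ x, (A ×ˢ B).indicator h (x, y)) k) :
    ∀ᵐ p, p ∉ A ×ˢ B → k p = 0 := by
  obtain ⟨k_int, k_nonneg, k_mx, k_my⟩ := hk
  refine ae_notMem_prod_imp_eq_zero k_int k_nonneg hA hB ?_ ?_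
  · filter_upwards [k_mx] with x hx hxA
    simp [hx, hxA]
  · filter_upwards [k_my] with y hy hyB
    simp [hy, hyB]

theorem inGammaBar_sub_indicator_add {hbar h k : (Fin d → ℝ) × (Fin d → ℝ) → ℝ}
    {S : Set ((Fin d → ℝ) × (Fin d → ℝ))} (hS : MeasurableSet S) (h_int : Integrable h)
    (h_nonneg : ∀ᵐ p, 0 ≤ h p) (h_le : ∀ᵐ p, h p ≤ hbar p)
    (hk : InGammaBar (fun x => ∫ y, S.indicator h (x, y)) (fun y => ∫ x, S.indicator h (x, y))
      hbar k)
    (hk_zero : ∀ᵐ p, p ∉ S → k p = 0) :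
    InGammaBar (fun x => ∫ y, h (x, y)) (fun y => ∫ x, h (x, y)) hbar
      (h - S.indicator h + k) := by
  classical
  obtain ⟨⟨k_int, k_nonneg, k_mx, k_my⟩, k_le⟩ := hk
  have hpiece : ∀ᵐ p, (h - S.indicator h + k) p = S.piecewise k h p := by
    filter_upwards [hk_zero] with p hp
    by_cases hpS : p ∈ S <;> simp [hpS, hp]
  have ht_int := h_int.indicator hS
  refine ⟨⟨(h_int.sub ht_int).add k_int, ?_, ae_integral_sub_add_right h_int ht_int k_int k_mx,
    ae_integral_sub_add_left h_int ht_int k_int k_my⟩, ?_⟩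
  · filter_upwards [hpiece, h_nonneg, k_nonneg] with p hp h0 k0
    rw [hp]
    by_cases hpS : p ∈ S <;> simp [hpS, h0, k0]
  · filter_upwards [hpiece, h_le, k_le] with p hp h1 k1
    rw [hp]
    by_cases hpS : p ∈ S <;> simp [hpS, h1, k1]

end Transport

theorem restriction_inherits_optimality (d : ℕ)
    (c : ((Fin d → ℝ) × (Fin d → ℝ)) → ℝ)
    (hc_cont : Continuous c) (hc_bdd : ∃ M, ∀ p, |c p| ≤ M)
    (hbar : ((Fin d → ℝ) × (Fin d → ℝ)) → ℝ)
    (hbar_nonneg : ∀ p, 0 ≤ hbar p)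
    (h : ((Fin d → ℝ) × (Fin d → ℝ)) → ℝ)
    (h_int : Integrable h volume) (h_nonneg : ∀ᵐ p ∂volume, 0 ≤ h p)
    (hmem : InGammaBar (fun x => ∫ y, h (x, y)) (fun y => ∫ x, h (x, y)) hbar h)
    (hopt : ∀ k, InGammaBar (fun x => ∫ y, h (x, y)) (fun y => ∫ x, h (x, y)) hbar k →
      Icost c h ≤ Icost c k)
    (A B : Set (Fin d → ℝ)) (hA : MeasurableSet A) (hB : MeasurableSet B) :
    InGammaBar (fun x => ∫ y, (A ×ˢ B).indicator h (x, y))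
        (fun y => ∫ x, (A ×ˢ B).indicator h (x, y)) hbar ((A ×ˢ B).indicator h) ∧
      ∀ k, InGammaBar (fun x => ∫ y, (A ×ˢ B).indicator h (x, y))
          (fun y => ∫ x, (A ×ˢ B).indicator h (x, y)) hbar k →
        Icost c ((A ×ˢ B).indicator h) ≤ Icost c k := by
  have hS := hA.prod hB
  refine ⟨inGammaBar_indicator hS h_int h_nonneg hmem.2 hbar_nonneg, fun k hk => ?_⟩
  have hk_zero := hk.1.ae_eq_zero_off_prod hA hB
  have h_le_competitor :=
    hopt _ (inGammaBar_sub_indicator_add hS h_int h_nonneg hmem.2 hk hk_zero)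
  have hc : AEStronglyMeasurable c := hc_cont.aestronglyMeasurable
  rw [Icost_add hc hc_bdd (h_int.sub (h_int.indicator hS)) hk.1.1,
    Icost_sub hc hc_bdd h_int (h_int.indicator hS)] at h_le_competitor
  linarith
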